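/- arXiv:2604.08638 — 3 statements merged into one kernel-verified Lean document; each statement's English description precedes it below -/
import Mathlib

section
/- Let K be an almost real closed field, i.e. a field admitting a valuation subring that is henselian as a local ring and whose residue field is real closed. If <₁ and <₂ are two linear orders on K, each making K a linearly ordered field, then the order topology on K induced by <₁ coincides with the order topology on K induced by <₂. -/
/-- A linear order on a field `K` (given by its strict order relation) making `K`
a linearly ordered field. -/
structure FieldOrder (K : Type*) [Field K] where
  /-- the strict order relation -/
  lt : K → K → Prop
  lt_trans : ∀ a b c : K, lt a b → lt b c → lt a c
  lt_irrefl : ∀ a : K, ¬ lt a a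
  lt_total : ∀ a b : K, a ≠ b → lt a b ∨ lt b a
  add_lt_add_left : ∀ a b c : K, lt a b → lt (c + a) (c + b)
  mul_pos : ∀ a b : K, lt 0 a → lt 0 b → lt 0 (a * b)

/-- The order topology on `K` associated to a strict order relation `lt`:
the topology generated by the open intervals. -/
def orderTopologyOf {K : Type*} (lt : K → K → Prop) : TopologicalSpace K :=
  TopologicalSpace.generateFrom {s | ∃ a b : K, s = {x | lt a x ∧ lt x b}}

/-- A linearly ordered field (given by a `FieldOrder`) is real closed if every nonnegative
element is a square and every polynomial of odd degree has a root. -/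
def FieldOrder.IsRealClosed {K : Type*} [Field K] (o : FieldOrder K) : Prop :=
  (∀ x : K, ¬ o.lt x 0 → ∃ y : K, y ^ 2 = x) ∧
    (∀ p : Polynomial K, Odd p.natDegree → ∃ x : K, p.eval x = 0)

/-- A field is almost real closed if it admits a henselian valuation subring whose
residue field admits an order making it a real closed field. -/
def IsAlmostRealClosedField (K : Type*) [Field K] : Prop :=
  ∃ A : ValuationSubring K, HenselianLocalRing A ∧
    ∃ o : FieldOrder (IsLocalRing.ResidueField A), o.IsRealClosed

/-
Let `A` be a henselian valuation ring of `K` with real closed residue field `k`; since `k` is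
ordered, `2` is a unit of `A`. By Hensel's lemma every element of `1 + 𝔪_A` is a square, so for
every field order on `K` the maximal ideal lies in `(-1, 1)`. Scaling, the valuation ball
`{y | v y < v ε}` lies in `(-ε, ε)` for every positive `ε`, and if `t ≠ 0` has `v t < 1`, then
`(-|t ε|, |t ε|)` lies in that ball. Hence when `v` is nontrivial the intervals around `0` of any
two orders refine each other, and both order topologies are the valuation topology. When `v` is
trivial, `K ≅ k`, so every element of `K` is a square or minus a square and `K` has only one
order.
-/

open IsLocalRing

namespace FieldOrder

variable {K : Type*} [Field K] (o : FieldOrder K)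

/-- `a < b` unfolds to `o.lt a b` for this order, so facts about `o` can be passed directly to
Mathlib's ordered-field lemmas after `let _ := o.toLinearOrder`. -/
noncomputable abbrev toLinearOrder : LinearOrder K where
  le a b := o.lt a b ∨ a = b
  lt := o.lt
  le_refl _ := Or.inr rfl
  le_trans a b c := by
    rintro (hab | rfl) (hbc | rfl)
    exacts [Or.inl (o.lt_trans a b c hab hbc), Or.inl hab, Or.inl hbc, Or.inr rfl]
  le_antisymm a b := by
    rintro (hab | rfl) (hba | hba)
    exacts [(o.lt_irrefl a (o.lt_trans a b a hab hba)).elim, hba.symm, rfl, rfl]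
  lt_iff_le_not_ge a b := by
    refine ⟨fun h => ⟨Or.inl h, ?_⟩, ?_⟩
    · rintro (h' | rfl)
      exacts [o.lt_irrefl a (o.lt_trans a b a h h'), o.lt_irrefl b h]
    · rintro ⟨h | rfl, h'⟩
      exacts [h, (h' (Or.inr rfl)).elim]
  le_total a b := by
    by_cases h : a = b
    · exact Or.inl (Or.inr h)
    · exact (o.lt_total a b h).imp Or.inl Or.inl
  toDecidableLE := Classical.decRel _

theorem isStrictOrderedRing : letI := o.toLinearOrder; IsStrictOrderedRing K := by
  let _ := o.toLinearOrder
  have : IsOrderedAddMonoid K := by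
    refine { add_le_add_left := ?_ }
    rintro a b (h | rfl) c
    · exact Or.inl (by simpa only [add_comm _ c] using o.add_lt_add_left a b c h)
    · exact le_rfl
  have : ZeroLEOneClass K := ⟨by
    refine le_of_not_gt fun h => lt_asymm h ?_
    have h1 : (0 : K) < -1 * -1 := o.mul_pos _ _ (neg_pos.2 h) (neg_pos.2 h)
    rwa [neg_mul_neg, one_mul] at h1⟩
  exact .of_mul_pos o.mul_pos

def Ioo (a b : K) : Set K := {x | o.lt a x ∧ o.lt x b}

end FieldOrder

section IntervalTranslation

variable {α : Type*} [AddCommGroup α] [LinearOrder α] [IsOrderedAddMonoid α]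

theorem mem_Ioo_sub_add_iff {x δ y : α} :
    y ∈ Set.Ioo (x - δ) (x + δ) ↔ y - x ∈ Set.Ioo (-δ) δ := by
  rw [Set.sub_mem_Ioo_iff_left, neg_add_eq_sub, add_comm]

theorem exists_pos_Ioo_sub_add_subset {a b x : α} (hx : x ∈ Set.Ioo a b) :
    ∃ ε > 0, Set.Ioo (x - ε) (x + ε) ⊆ Set.Ioo a b :=
  ⟨min (x - a) (b - x), lt_min (sub_pos.2 hx.1) (sub_pos.2 hx.2),
    Set.Ioo_subset_Ioo (le_sub_comm.1 (min_le_left _ _))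
      (le_sub_iff_add_le'.1 (min_le_right _ _))⟩

end IntervalTranslation

theorem pos_iff_ne_zero_and_isSquare {R : Type*} [Ring R] [LinearOrder R] [IsStrictOrderedRing R]
    (h : ∀ x : R, IsSquare x ∨ IsSquare (-x)) {x : R} : 0 < x ↔ x ≠ 0 ∧ IsSquare x :=
  ⟨fun hx => ⟨hx.ne', (h x).resolve_right fun hn => hx.not_ge (neg_nonneg.1 hn.nonneg)⟩,
    fun ⟨hx, hsq⟩ => hsq.nonneg.lt_of_ne' hx⟩

namespace FieldOrder

variable {K : Type*} [Field K]

theorem orderTopologyOf_le_of_Ioo_subset {P Q : FieldOrder K}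
    (h : ∀ ε, P.lt 0 ε → ∃ δ, Q.lt 0 δ ∧ Q.Ioo (-δ) δ ⊆ P.Ioo (-ε) ε) :
    orderTopologyOf Q.lt ≤ orderTopologyOf P.lt := by
  refine le_generateFrom ?_
  rintro _ ⟨a, b, rfl⟩
  let _ := orderTopologyOf Q.lt
  refine isOpen_iff_forall_mem_open.mpr fun x hx => ?_
  obtain ⟨ε, hε, hεab⟩ : ∃ ε, P.lt 0 ε ∧ P.Ioo (x - ε) (x + ε) ⊆ P.Ioo a b := by
    let _ := P.toLinearOrder
    have := P.isStrictOrderedRing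
    exact exists_pos_Ioo_sub_add_subset hx
  obtain ⟨δ, hδ, hδε⟩ := h ε hε
  refine ⟨Q.Ioo (x - δ) (x + δ), fun y hy => hεab ?_,
    TopologicalSpace.isOpen_generateFrom_of_mem ⟨_, _, rfl⟩, ?_⟩
  · have hyx : y - x ∈ Q.Ioo (-δ) δ := by
      let _ := Q.toLinearOrder
      have := Q.isStrictOrderedRing
      exact mem_Ioo_sub_add_iff.1 hy
    let _ := P.toLinearOrder
    have := P.isStrictOrderedRing
    exact mem_Ioo_sub_add_iff.2 (hδε hyx)
  · let _ := Q.toLinearOrder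
    have := Q.isStrictOrderedRing
    exact ⟨sub_lt_self x hδ, lt_add_of_pos_right x hδ⟩

theorem subsingleton_of_forall_isSquare_or_isSquare_neg
    (h : ∀ x : K, IsSquare x ∨ IsSquare (-x)) : Subsingleton (FieldOrder K) := by
  have lt_iff (o : FieldOrder K) (a b : K) : o.lt a b ↔ b - a ≠ 0 ∧ IsSquare (b - a) := by
    let _ := o.toLinearOrder
    have := o.isStrictOrderedRing
    exact sub_pos.symm.trans (pos_iff_ne_zero_and_isSquare h)
  refine ⟨fun P Q => ?_⟩
  have hlt : P.lt = Q.lt := by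
    ext a b
    rw [lt_iff P, lt_iff Q]
  cases P
  cases Q
  simpa only [mk.injEq] using hlt

theorem IsRealClosed.isSquare_or_isSquare_neg {o : FieldOrder K} (ho : o.IsRealClosed) (x : K) :
    IsSquare x ∨ IsSquare (-x) := by
  let _ := o.toLinearOrder
  have := o.isStrictOrderedRing
  have hsq (y : K) (hy : 0 ≤ y) : IsSquare y := by
    obtain ⟨z, hz⟩ := ho.1 y hy.not_gt
    exact ⟨z, hz ▸ sq z⟩
  exact (le_total 0 x).imp (hsq x) fun hx => hsq (-x) (neg_nonneg.2 hx)

end FieldOrder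

open Polynomial in
theorem HenselianLocalRing.isSquare_one_add {R : Type*} [CommRing R] [HenselianLocalRing R]
    (h2 : IsUnit (2 : R)) {z : R} (hz : z ∈ maximalIdeal R) : IsSquare (1 + z) := by
  have hroot : (X ^ 2 - C (1 + z)).eval 1 ∈ maximalIdeal R := by
    simpa using neg_mem hz
  have hsimple : IsUnit ((X ^ 2 - C (1 + z)).derivative.eval 1) := by
    simpa [one_add_one_eq_two] using h2
  obtain ⟨a, ha, -⟩ := HenselianLocalRing.is_henselian _
    (monic_X_pow_sub_C _ two_ne_zero) 1 hroot hsimple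
  refine ⟨a, ?_⟩
  simp only [IsRoot, eval_sub, eval_pow, eval_X, eval_C] at ha
  linear_combination -ha

namespace ValuationSubring

variable {K : Type*} [Field K] [LinearOrder K] [IsStrictOrderedRing K]
  (A : ValuationSubring K) [HenselianLocalRing A] (h2 : IsUnit (2 : A))
include h2

theorem one_add_pos_of_valuation_lt_one {z : K} (hz : A.valuation z < 1) : 0 < 1 + z := by
  have hzA : z ∈ A := A.mem_of_valuation_le_one z hz.le
  obtain ⟨a, ha⟩ := HenselianLocalRing.isSquare_one_add h2
    ((A.valuation_lt_one_iff ⟨z, hzA⟩).mpr hz)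
  have hsq : 1 + z = a * a := congrArg Subtype.val ha
  have hne : 1 + z ≠ 0 := fun h => by
    rw [eq_neg_of_add_eq_zero_right h, Valuation.map_neg, Valuation.map_one] at hz
    exact hz.false
  exact lt_of_le_of_ne (by rw [hsq]; exact mul_self_nonneg _) hne.symm

theorem abs_lt_of_valuation_lt {ε y : K} (hε : 0 < ε) (hy : A.valuation y < A.valuation ε) :
    |y| < ε := by
  have hv : A.valuation (y / ε) < 1 := by
    rw [map_div₀, div_lt_one₀ ((Valuation.pos_iff _).2 hε.ne')]
    exact hy
  have h₁ := A.one_add_pos_of_valuation_lt_one h2 hv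
  have h₂ := A.one_add_pos_of_valuation_lt_one h2 (z := -(y / ε)) (by rwa [Valuation.map_neg])
  rw [abs_lt]
  constructor
  · have := mul_pos hε h₁
    rw [mul_add, mul_div_cancel₀ _ hε.ne'] at this
    linarith
  · have := mul_pos hε h₂
    rw [mul_add, mul_neg, mul_div_cancel₀ _ hε.ne'] at this
    linarith

theorem valuation_lt_of_abs_lt_abs_mul {t γ y : K} (ht : A.valuation t < 1)
    (hy : |y| < |t * γ|) : A.valuation y < A.valuation γ := by
  have hγ : γ ≠ 0 := by
    rintro rfl
    exact (abs_nonneg y).not_gt (by simpa using hy)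
  by_contra! hle
  have hvy : A.valuation |y| = A.valuation y := by
    rcases abs_choice y with h | h <;> simp [h]
  refine hy.not_ge (abs_lt_of_valuation_lt A h2 (abs_pos.2 ?_) ?_).le
  · rintro rfl
    exact hγ (by simpa using hle)
  · rw [hvy, map_mul]
    exact (mul_lt_of_lt_one_left ((Valuation.pos_iff _).2 hγ) ht).trans_le hle

end ValuationSubring


theorem ValuationSubring.exists_Ioo_subset_Ioo {K : Type*} [Field K] (A : ValuationSubring K)
    [HenselianLocalRing A] [A.valuation.IsNontrivial] (h2 : IsUnit (2 : A))
    (P Q : FieldOrder K) {ε : K} (hε : P.lt 0 ε) :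
    ∃ δ, Q.lt 0 δ ∧ Q.Ioo (-δ) δ ⊆ P.Ioo (-ε) ε := by
  obtain ⟨t, ht₀, ht⟩ := Valuation.IsNontrivial.exists_lt_one (v := A.valuation)
  have hε₀ : ε ≠ 0 := by
    rintro rfl
    exact P.lt_irrefl 0 hε
  obtain ⟨δ, hδ, hδv⟩ :
      ∃ δ, Q.lt 0 δ ∧ ∀ y ∈ Q.Ioo (-δ) δ, A.valuation y < A.valuation ε := by
    let _ := Q.toLinearOrder
    have := Q.isStrictOrderedRing
    exact ⟨|t * ε|, abs_pos.2 (mul_ne_zero ht₀ hε₀),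
      fun y hy => A.valuation_lt_of_abs_lt_abs_mul h2 ht (abs_lt.2 hy)⟩
  refine ⟨δ, hδ, fun y hy => ?_⟩
  let _ := P.toLinearOrder
  have := P.isStrictOrderedRing
  exact abs_lt.1 (A.abs_lt_of_valuation_lt h2 hε (hδv y hy))



theorem ValuationSubring.isSquare_or_isSquare_neg {K : Type*} [Field K] (A : ValuationSubring K)
    (hA : ¬ A.valuation.IsNontrivial) (hk : ∀ r : ResidueField A, IsSquare r ∨ IsSquare (-r))
    (x : K) : IsSquare x ∨ IsSquare (-x) := by
  rw [Valuation.isNontrivial_iff_exists_lt_one] at hA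
  push Not at hA
  have isSquare_of_residue (u : A) (hu : IsSquare (residue A u)) : IsSquare (u : K) := by
    obtain ⟨s, hs⟩ := hu
    obtain ⟨b, rfl⟩ := residue_surjective s
    have hmem : u - b * b ∈ maximalIdeal A :=
      (residue_eq_zero_iff _).1 (by rw [map_sub, map_mul, hs, sub_self])
    have hzero : ((u - b * b : A) : K) = 0 := by
      by_contra hne
      exact (hA _ hne).not_gt ((A.valuation_lt_one_iff _).1 hmem)
    exact ⟨b, by push_cast at hzero; linear_combination hzero⟩
  wlog hx : x ∈ A generalizing x
  · simpa only [← inv_neg, isSquare_inv] using this x⁻¹ ((A.mem_or_inv_mem x).resolve_left hx)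
  exact (hk (residue A ⟨x, hx⟩)).imp (isSquare_of_residue _)
    fun h => isSquare_of_residue (-⟨x, hx⟩) (by rwa [map_neg])

/-- On an almost real closed field, any two orders making it a linearly ordered field
induce the same order topology. -/
theorem orderTopology_eq_of_almostRealClosed (K : Type*) [Field K]
    (hK : IsAlmostRealClosedField K) (o₁ o₂ : FieldOrder K) :
    orderTopologyOf o₁.lt = orderTopologyOf o₂.lt := by
  obtain ⟨A, _, o, ho⟩ := hK
  by_cases hA : A.valuation.IsNontrivial
  · have h2 : IsUnit (2 : A) := by
      let _ := o.toLinearOrder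
      have := o.isStrictOrderedRing
      exact (residue_ne_zero_iff_isUnit 2).1 (by rw [map_ofNat]; exact two_ne_zero)
    exact le_antisymm
      (FieldOrder.orderTopologyOf_le_of_Ioo_subset fun _ => A.exists_Ioo_subset_Ioo h2 o₂ o₁)
      (FieldOrder.orderTopologyOf_le_of_Ioo_subset fun _ => A.exists_Ioo_subset_Ioo h2 o₁ o₂)
  · have := FieldOrder.subsingleton_of_forall_isSquare_or_isSquare_neg
      (A.isSquare_or_isSquare_neg hA ho.isSquare_or_isSquare_neg)
    rw [Subsingleton.elim o₁ o₂]
end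

section
/- Let (K,<) be a linearly ordered field and let A be a convex valuation subring of K. Let U = {u ∈ K : u > 0 and u is a unit of A} and let K₊ = {x ∈ K : x > 0}, both considered as multiplicative groups. Suppose there exists a group homomorphism σ : K₊ → U with σ(u) = u for every u ∈ U. Then K admits an angular component map for A that is compatible with <; explicitly, the map ac defined by ac(x) = res(σ(x)) for x > 0, ac(x) = −res(σ(−x)) for x < 0, and ac(0) = 0 is an angular component map for A compatible with <. -/
/-- A valuation subring of a linearly ordered field is convex if together with any two
of its elements it contains every element of the field lying between them. -/
def IsConvexValuationSubring (K : Type*) [Field K] [LinearOrder K] [IsStrictOrderedRing K]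
    (A : ValuationSubring K) : Prop :=
  ∀ a b c : K, a ∈ A → b ∈ A → a ≤ c → c ≤ b → c ∈ A

open scoped Classical

/-- The residue map of a valuation subring `A`, extended to all of `K` by `0`
outside of `A`. -/
noncomputable def residueOn {K : Type*} [Field K] (A : ValuationSubring K) (x : K) :
    IsLocalRing.ResidueField A :=
  if h : x ∈ A then IsLocalRing.residue A ⟨x, h⟩ else 0

/-- `ac : K → ResidueField A` is an angular component map for `A` compatible with the
order on `K`, where the residue field is equipped with the linear order `lo'`:
`ac 0 = 0`, `ac` is multiplicative, `ac` agrees with the residue map on units of `A`,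
and `x > 0` if and only if `ac x > 0`. -/
def IsCompatibleAngularComponent {K : Type*} [Field K] [LinearOrder K] [IsStrictOrderedRing K]
    (A : ValuationSubring K) (lo' : LinearOrder (IsLocalRing.ResidueField A))
    (ac : K → IsLocalRing.ResidueField A) : Prop :=
  ac 0 = 0 ∧ (∀ x y : K, ac (x * y) = ac x * ac y) ∧
    (∀ (u : K) (h : u ∈ A), u⁻¹ ∈ A → ac u = IsLocalRing.residue A ⟨u, h⟩) ∧
    (∀ x : K, 0 < x ↔ lo'.lt 0 (ac x))

/-!
Extend `σ` to the odd map `σ̃ x = sign x * σ |x|` on `K`. It is multiplicative, takes values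
in `A`, is the identity on units of `A`, maps nonzero elements to units of `A` and preserves
the sign. The prescribed `ac` is `res ∘ σ̃`, so it is multiplicative and agrees with `res` on
units; its compatibility with the order is the defining property of the induced order on the
residue field, applied to the units `σ̃ x`.
-/

open IsLocalRing

section ResidueOn

variable {K : Type*} [Field K] (A : ValuationSubring K)

theorem residueOn_of_mem {x : K} (hx : x ∈ A) : residueOn A x = residue A ⟨x, hx⟩ :=
  dif_pos hx

@[simp]
theorem residueOn_zero : residueOn A (0 : K) = 0 := by
  rw [residueOn_of_mem A A.zero_mem]
  exact map_zero _

theorem residueOn_mul {x y : K} (hx : x ∈ A) (hy : y ∈ A) :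
    residueOn A (x * y) = residueOn A x * residueOn A y := by
  rw [residueOn_of_mem A hx, residueOn_of_mem A hy, residueOn_of_mem A (mul_mem hx hy),
    ← map_mul]
  rfl

theorem residueOn_neg (x : K) : residueOn A (-x) = -residueOn A x := by
  by_cases hx : x ∈ A
  · rw [residueOn_of_mem A hx, residueOn_of_mem A (neg_mem hx), ← map_neg]
    rfl
  · rw [residueOn, dif_neg (by simpa using hx), residueOn, dif_neg hx, neg_zero]

theorem residueOn_ne_zero {x : K} (hx0 : x ≠ 0) (hx : x ∈ A) (hxi : x⁻¹ ∈ A) :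
    residueOn A x ≠ 0 := by
  rw [residueOn_of_mem A hx, residue_ne_zero_iff_isUnit]
  exact IsUnit.of_mul_eq_one ⟨x⁻¹, hxi⟩ (Subtype.ext (mul_inv_cancel₀ hx0))

theorem residueOn_pos_iff [LT K] (lo' : LinearOrder (ResidueField A))
    (hind : ∀ a b : A, residue A a ≠ residue A b →
      (lo'.lt (residue A a) (residue A b) ↔ (a : K) < (b : K)))
    {x : K} (hx : x ∈ A) (hx0 : residueOn A x ≠ 0) : lo'.lt 0 (residueOn A x) ↔ 0 < x := by
  rw [residueOn_of_mem A hx] at hx0 ⊢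
  simpa using hind 0 ⟨x, hx⟩ (by simpa using hx0.symm)

end ResidueOn

section OddExtension

variable {K : Type*} [Field K] [LinearOrder K] [IsStrictOrderedRing K]

noncomputable def oddExtension (σ : K → K) (x : K) : K :=
  SignType.sign x * σ |x|

variable {σ : K → K}

@[simp]
theorem oddExtension_zero : oddExtension σ 0 = 0 := by
  simp [oddExtension]

theorem oddExtension_of_pos {x : K} (hx : 0 < x) : oddExtension σ x = σ x := by
  simp [oddExtension, sign_pos hx, abs_of_pos hx]

theorem oddExtension_of_neg {x : K} (hx : x < 0) : oddExtension σ x = -σ (-x) := by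
  simp [oddExtension, sign_neg hx, abs_of_neg hx]

theorem oddExtension_mul (hσ_mul : ∀ x y : K, 0 < x → 0 < y → σ (x * y) = σ x * σ y)
    (x y : K) : oddExtension σ (x * y) = oddExtension σ x * oddExtension σ y := by
  rcases eq_or_ne x 0 with rfl | hx
  · simp
  rcases eq_or_ne y 0 with rfl | hy
  · simp
  simp only [oddExtension, sign_mul, abs_mul, SignType.coe_mul,
    hσ_mul _ _ (abs_pos.2 hx) (abs_pos.2 hy)]
  ring

theorem oddExtension_ne_zero (hσ_pos : ∀ x : K, 0 < x → 0 < σ x) {x : K} (hx : x ≠ 0) :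
    oddExtension σ x ≠ 0 := by
  refine mul_ne_zero (left_ne_zero_of_mul (b := |x|) ?_) (hσ_pos _ (abs_pos.2 hx)).ne'
  rwa [sign_mul_abs]

theorem oddExtension_pos_iff (hσ_pos : ∀ x : K, 0 < x → 0 < σ x) (x : K) :
    0 < oddExtension σ x ↔ 0 < x := by
  rcases lt_trichotomy x 0 with hx | rfl | hx
  · rw [oddExtension_of_neg hx, neg_pos]
    exact iff_of_false (hσ_pos _ (neg_pos.2 hx)).not_gt hx.not_gt
  · simp
  · simp [oddExtension_of_pos hx, hσ_pos _ hx, hx]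

theorem oddExtension_of_mem_of_inv_mem (A : ValuationSubring K)
    (hσ_id : ∀ u : K, 0 < u → u ∈ A → u⁻¹ ∈ A → σ u = u)
    {u : K} (hu : u ∈ A) (hui : u⁻¹ ∈ A) : oddExtension σ u = u := by
  rcases lt_trichotomy u 0 with h | rfl | h
  · rw [oddExtension_of_neg h, hσ_id _ (neg_pos.2 h) (neg_mem hu) (by simpa using neg_mem hui),
      neg_neg]
  · exact oddExtension_zero
  · rw [oddExtension_of_pos h, hσ_id _ h hu hui]

theorem oddExtension_mem (A : ValuationSubring K) (hσ_mem : ∀ x : K, 0 < x → σ x ∈ A)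
    (x : K) : oddExtension σ x ∈ A := by
  rcases eq_or_ne x 0 with rfl | hx
  · simp
  refine mul_mem ?_ (hσ_mem _ (abs_pos.2 hx))
  cases SignType.sign x <;> simp [A.one_mem]

theorem inv_oddExtension_mem (A : ValuationSubring K)
    (hσ_inv : ∀ x : K, 0 < x → (σ x)⁻¹ ∈ A) (x : K) : (oddExtension σ x)⁻¹ ∈ A := by
  rcases eq_or_ne x 0 with rfl | hx
  · simp
  rw [oddExtension, mul_inv]
  refine mul_mem ?_ (hσ_inv _ (abs_pos.2 hx))
  cases SignType.sign x <;> simp [A.one_mem]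

theorem residueOn_comp_oddExtension (A : ValuationSubring K) (σ : K → K) :
    residueOn A ∘ oddExtension σ = fun x => if 0 < x then residueOn A (σ x)
      else if x < 0 then -(residueOn A (σ (-x))) else 0 := by
  funext x
  rcases lt_trichotomy x 0 with hx | rfl | hx
  · simp [oddExtension_of_neg hx, residueOn_neg, hx, hx.not_gt]
  · simp
  · simp [oddExtension_of_pos hx, hx]

end OddExtension

theorem angularComponent_of_section_general (K : Type*) [Field K] [LinearOrder K] [IsStrictOrderedRing K]
    (A : ValuationSubring K)
    -- `lo'` is the induced order on the residue field of `A`: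
    (lo' : LinearOrder (IsLocalRing.ResidueField A))
    (hind : ∀ a b : A, IsLocalRing.residue A a ≠ IsLocalRing.residue A b →
      (lo'.lt (IsLocalRing.residue A a) (IsLocalRing.residue A b) ↔ (a : K) < (b : K)))
    -- `σ : K₊ → U` is a group homomorphism with `σ u = u` for all `u ∈ U`:
    (σ : K → K)
    (hσ_mem : ∀ x : K, 0 < x → 0 < σ x ∧ σ x ∈ A ∧ (σ x)⁻¹ ∈ A)
    (hσ_mul : ∀ x y : K, 0 < x → 0 < y → σ (x * y) = σ x * σ y)
    (hσ_id : ∀ u : K, 0 < u → u ∈ A → u⁻¹ ∈ A → σ u = u) :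
    IsCompatibleAngularComponent A lo'
      (fun x => if 0 < x then residueOn A (σ x)
        else if x < 0 then -(residueOn A (σ (-x))) else 0) := by
  have hσ_pos x hx := (hσ_mem x hx).1
  have hmem := oddExtension_mem A (fun x hx => (hσ_mem x hx).2.1)
  rw [← residueOn_comp_oddExtension]
  refine ⟨by simp, fun x y => ?_, fun u hu hui => ?_, fun x => ?_⟩
  · simp only [Function.comp_apply, oddExtension_mul hσ_mul, residueOn_mul A (hmem x) (hmem y)]
  · simp only [Function.comp_apply, oddExtension_of_mem_of_inv_mem A hσ_id hu hui,
      residueOn_of_mem A hu]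
  · rcases eq_or_ne x 0 with rfl | hx
    · simp
    have hres := residueOn_ne_zero A (oddExtension_ne_zero hσ_pos hx) (hmem x)
      (inv_oddExtension_mem A (fun x hx => (hσ_mem x hx).2.2) x)
    rw [Function.comp_apply, residueOn_pos_iff A lo' hind (hmem x) hres,
      oddExtension_pos_iff hσ_pos]

/-- Let `(K, <)` be a linearly ordered field, `A` a convex valuation subring of `K`,
`U` the group of positive units of `A` and `K₊` the multiplicative group of positive
elements of `K`. If `σ : K₊ → U` is a group homomorphism restricting to the identity
on `U`, then the map `ac` defined by `ac x = res (σ x)` for `x > 0`,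
`ac x = -res (σ (-x))` for `x < 0` and `ac 0 = 0` is an angular component map for `A`
compatible with `<` (the residue field being equipped with its induced order `lo'`). -/
theorem angularComponent_of_section (K : Type*) [Field K] [LinearOrder K] [IsStrictOrderedRing K]
    (A : ValuationSubring K) (hconv : IsConvexValuationSubring K A)
    -- `lo'` is the induced order on the residue field of `A`:
    (lo' : LinearOrder (IsLocalRing.ResidueField A))
    (hind : ∀ a b : A, IsLocalRing.residue A a ≠ IsLocalRing.residue A b →
      (lo'.lt (IsLocalRing.residue A a) (IsLocalRing.residue A b) ↔ (a : K) < (b : K)))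
    -- `σ : K₊ → U` is a group homomorphism with `σ u = u` for all `u ∈ U`:
    (σ : K → K)
    (hσ_mem : ∀ x : K, 0 < x → 0 < σ x ∧ σ x ∈ A ∧ (σ x)⁻¹ ∈ A)
    (hσ_mul : ∀ x y : K, 0 < x → 0 < y → σ (x * y) = σ x * σ y)
    (hσ_id : ∀ u : K, 0 < u → u ∈ A → u⁻¹ ∈ A → σ u = u) :
    IsCompatibleAngularComponent A lo'
      (fun x => if 0 < x then residueOn A (σ x)
        else if x < 0 then -(residueOn A (σ (-x))) else 0) :=
  angularComponent_of_section_general K A lo' hind σ hσ_mem hσ_mul hσ_id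
end

section
/- Let K be a field with a linear order < making it a linearly ordered field, and let A be a valuation subring of K that is convex with respect to <, is henselian as a local ring, and whose residue field (with the induced order) is real closed. Then there exists an angular component map ac : K → ResidueField(A) that is compatible with <. -/
/-- A field `F` equipped with a linear order `lo` is real closed if every nonnegative
element is a square and every polynomial of odd degree has a root. -/
def IsRealClosedWith (F : Type*) [Field F] (lo : LinearOrder F) : Prop :=
  (∀ x : F, ¬ lo.lt x 0 → ∃ y : F, y ^ 2 = x) ∧
    (∀ p : Polynomial F, Odd p.natDegree → ∃ x : F, p.eval x = 0)

theorem IsStrictOrderedRing.of_surjective_of_lt_iff {R F : Type*} [CommRing R] [LinearOrder R]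
    [IsStrictOrderedRing R] [CommRing F] [IsDomain F] [LinearOrder F] (f : R →+* F)
    (hf : Function.Surjective f) (hlt : ∀ a b, f a ≠ f b → (f a < f b ↔ a < b)) :
    IsStrictOrderedRing F := by
  have hpos : ∀ a, f a ≠ 0 → (0 < f a ↔ 0 < a) := fun a ha ↦ by
    simpa using hlt 0 a (by simpa using ha.symm)
  have hadd (a b : F) (hab : a ≤ b) (c : F) : a + c ≤ b + c := by
    obtain ⟨x, rfl⟩ := hf a
    obtain ⟨y, rfl⟩ := hf b
    obtain ⟨z, rfl⟩ := hf c
    rcases eq_or_ne (f x) (f y) with hxy | hxy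
    · rw [hxy]
    have hxz : f (x + z) ≠ f (y + z) := by simpa using hxy
    simpa using ((hlt _ _ hxz).2 (add_lt_add_left ((hlt x y hxy).1 (hab.lt_of_ne hxy)) z)).le
  have : IsOrderedAddMonoid F := { add_le_add_left := hadd }
  have : ZeroLEOneClass F := ⟨by simpa using ((hlt 0 1 (by simp)).2 one_pos).le⟩
  refine .of_mul_pos fun a b ha hb ↦ ?_
  obtain ⟨x, rfl⟩ := hf a
  obtain ⟨y, rfl⟩ := hf b
  rw [← map_mul, hpos _ (by simpa using ⟨ha.ne', hb.ne'⟩)]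
  exact mul_pos ((hpos x ha.ne').1 ha) ((hpos y hb.ne').1 hb)

theorem Positive.zpow_surjective {F : Type*} [Field F] [LinearOrder F] [IsStrictOrderedRing F]
    [IsRealClosed F] {k : ℤ} (hk : k ≠ 0) :
    Function.Surjective fun a : { x : F // 0 < x } ↦ a ^ k := by
  intro a
  obtain ⟨r, hr⟩ := IsRealClosed.exists_eq_zpow_of_nonneg a.2.le hk
  have hr0 : r ≠ 0 := by rintro rfl; exact a.2.ne' (by simpa [zero_zpow _ hk] using hr)
  refine ⟨⟨|r|, abs_pos.2 hr0⟩, Subtype.ext ?_⟩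
  rw [Positive.coe_zpow, ← abs_zpow, ← hr, abs_of_pos a.2]

theorem MonoidHom.exists_comp_eq_of_injective {M N P : Type*} [CommGroup M] [CommGroup N]
    [CommGroup P] [RootableBy P ℤ] (f : M →* N) (hf : Function.Injective f) (g : M →* P) :
    ∃ h : N →* P, h.comp f = g := by
  let : DivisibleBy (Additive P) ℤ :=
    divisibleByOfSMulRightSurj _ _ fun hn a ↦ RootableBy.surjective_pow P ℤ hn a.toMul
  obtain ⟨h, hh⟩ := (Module.Baer.of_divisible _).extension_property_addMonoidHom
    f.toAdditive hf g.toAdditive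
  exact ⟨MonoidHom.toAdditive.symm h, congrArg MonoidHom.toAdditive.symm hh⟩

section ExtendBySign

variable {K k : Type*} [CommRing K] [LinearOrder K] [IsStrictOrderedRing K]
  [CommRing k] [LinearOrder k] [IsStrictOrderedRing k]

noncomputable def extendBySign (ψ : { x : K // 0 < x } →* { y : k // 0 < y }) (x : K) : k :=
  if hx : x = 0 then 0 else SignType.sign x * ψ ⟨|x|, abs_pos.2 hx⟩

variable (ψ : { x : K // 0 < x } →* { y : k // 0 < y })

@[simp]
theorem extendBySign_zero : extendBySign ψ 0 = 0 := dif_pos rfl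

theorem extendBySign_of_ne_zero {x : K} (hx : x ≠ 0) :
    extendBySign ψ x = SignType.sign x * ψ ⟨|x|, abs_pos.2 hx⟩ := dif_neg hx

theorem extendBySign_of_pos {x : K} (hx : 0 < x) : extendBySign ψ x = ψ ⟨x, hx⟩ := by
  simp only [extendBySign_of_ne_zero ψ hx.ne', sign_pos hx, abs_of_pos hx, SignType.coe_one,
    one_mul]

theorem extendBySign_neg (x : K) : extendBySign ψ (-x) = -extendBySign ψ x := by
  rcases eq_or_ne x 0 with rfl | hx
  · simp
  simp only [extendBySign_of_ne_zero ψ hx, extendBySign_of_ne_zero ψ (neg_ne_zero.2 hx), abs_neg,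
    Left.sign_neg, SignType.coe_neg, neg_mul]

theorem extendBySign_mul (x y : K) :
    extendBySign ψ (x * y) = extendBySign ψ x * extendBySign ψ y := by
  rcases eq_or_ne x 0 with rfl | hx
  · simp
  rcases eq_or_ne y 0 with rfl | hy
  · simp
  have habs : (⟨|x * y|, abs_pos.2 (mul_ne_zero hx hy)⟩ : { x : K // 0 < x }) =
      ⟨|x|, abs_pos.2 hx⟩ * ⟨|y|, abs_pos.2 hy⟩ := Subtype.ext (abs_mul x y)
  rw [extendBySign_of_ne_zero ψ (mul_ne_zero hx hy), extendBySign_of_ne_zero ψ hx,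
    extendBySign_of_ne_zero ψ hy, habs, map_mul ψ, Positive.val_mul, sign_mul, SignType.coe_mul]
  ring

theorem extendBySign_pos_iff {x : K} : 0 < extendBySign ψ x ↔ 0 < x := by
  rcases lt_trichotomy x 0 with hx | rfl | hx
  · rw [← neg_neg x, extendBySign_neg, extendBySign_of_pos ψ (neg_pos.2 hx)]
    exact iff_of_false (by simpa using (ψ ⟨-x, neg_pos.2 hx⟩).2.le) (by simpa using hx.not_gt)
  · simp
  · exact iff_of_true (extendBySign_of_pos ψ hx ▸ (ψ ⟨x, hx⟩).2) hx

end ExtendBySign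

namespace ValuationSubring

open IsLocalRing

variable {K : Type*} [Field K] [LinearOrder K] [IsStrictOrderedRing K] (A : ValuationSubring K)

def posUnits : Subgroup { x : K // 0 < x } where
  carrier := { x | (x : K) ∈ A ∧ (x : K)⁻¹ ∈ A }
  mul_mem' hx hy :=
    ⟨A.mul_mem _ _ hx.1 hy.1, by rw [Positive.val_mul, mul_inv]; exact A.mul_mem _ _ hx.2 hy.2⟩
  one_mem' := ⟨A.one_mem, by simp⟩
  inv_mem' hx := ⟨hx.2, by rw [Positive.coe_inv, inv_inv]; exact hx.1⟩

variable [LinearOrder (ResidueField A)] [IsStrictOrderedRing (ResidueField A)]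
  (hpos : ∀ a : A, IsUnit a → 0 < (a : K) → 0 < residue A a)

noncomputable def posUnitsToResidue : A.posUnits →* { y : ResidueField A // 0 < y } where
  toFun u := ⟨residue A ⟨u, u.2.1⟩, hpos _
    (.of_mul_eq_one ⟨_, u.2.2⟩ (Subtype.ext (mul_inv_cancel₀ u.1.2.ne'))) u.1.2⟩
  map_one' := Subtype.ext (map_one (residue A))
  map_mul' u v := Subtype.ext (map_mul (residue A) ⟨u, u.2.1⟩ ⟨v, v.2.1⟩)

theorem extendBySign_eq_residue {ψ : { x : K // 0 < x } →* { y : ResidueField A // 0 < y }}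
    (hψ : ψ.comp A.posUnits.subtype = A.posUnitsToResidue hpos)
    {u : K} (hu : u ∈ A) (hinv : u⁻¹ ∈ A) :
    extendBySign ψ u = residue A ⟨u, hu⟩ := by
  have of_pos {v : K} (hv : 0 < v) (hvA : v ∈ A) (hvinv : v⁻¹ ∈ A) :
      extendBySign ψ v = residue A ⟨v, hvA⟩ := by
    rw [extendBySign_of_pos ψ hv]
    exact congrArg Subtype.val (DFunLike.congr_fun hψ ⟨⟨v, hv⟩, hvA, hvinv⟩)
  rcases lt_trichotomy u 0 with hneg | rfl | hu0
  · have := extendBySign_neg ψ (-u)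
    rw [neg_neg] at this
    rw [this, of_pos (neg_pos.2 hneg) (A.neg_mem _ hu) (by simpa using A.neg_mem _ hinv),
      ← map_neg]
    exact congrArg _ (Subtype.ext (neg_neg u))
  · exact (extendBySign_zero ψ).trans (map_zero (residue A)).symm
  · exact of_pos hu0 hu hinv

end ValuationSubring

theorem exists_compatible_angularComponent_general (K : Type*) [Field K] [LinearOrder K] [IsStrictOrderedRing K]
    (A : ValuationSubring K)
    -- `lo'` is the induced order on the residue field of `A`:
    (lo' : LinearOrder (IsLocalRing.ResidueField A))
    (hind : ∀ a b : A, IsLocalRing.residue A a ≠ IsLocalRing.residue A b →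
      (lo'.lt (IsLocalRing.residue A a) (IsLocalRing.residue A b) ↔ (a : K) < (b : K)))
    (hrc : IsRealClosedWith (IsLocalRing.ResidueField A) lo') :
    ∃ ac : K → IsLocalRing.ResidueField A, IsCompatibleAngularComponent A lo' ac := by
  let := lo'
  have : IsStrictOrderedRing (IsLocalRing.ResidueField A) :=
    .of_surjective_of_lt_iff _ IsLocalRing.residue_surjective hind
  have : IsRealClosed (IsLocalRing.ResidueField A) :=
    .of_linearOrderedField (fun hx ↦ (hrc.1 _ hx.not_gt).imp fun y hy ↦ by rw [← hy, sq])
      (hrc.2 _)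
  let : RootableBy { y : IsLocalRing.ResidueField A // 0 < y } ℤ :=
    rootableByOfPowLeftSurj _ _ Positive.zpow_surjective
  have hpos (a : A) (ha : IsUnit a) (ha0 : 0 < (a : K)) : 0 < IsLocalRing.residue A a := by
    have ha' := (IsLocalRing.residue_ne_zero_iff_isUnit a).2 ha
    simpa using (hind 0 a (by simpa using ha'.symm)).2 ha0
  obtain ⟨ψ, hψ⟩ :=
    A.posUnits.subtype.exists_comp_eq_of_injective A.posUnits.subtype_injective
      (A.posUnitsToResidue hpos)
  exact ⟨extendBySign ψ, extendBySign_zero ψ, extendBySign_mul ψ,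
    fun _ ↦ A.extendBySign_eq_residue hpos hψ, fun _ ↦ (extendBySign_pos_iff ψ).symm⟩

/-- Let `(K, <)` be a linearly ordered field and let `A` be a convex valuation subring
of `K` which is henselian as a local ring and whose residue field, with the induced
order, is real closed. Then there exists an angular component map
`ac : K → ResidueField A` compatible with `<`. -/
theorem exists_compatible_angularComponent (K : Type*) [Field K] [LinearOrder K] [IsStrictOrderedRing K]
    (A : ValuationSubring K) (hconv : IsConvexValuationSubring K A)
    (hhens : HenselianLocalRing A)
    -- `lo'` is the induced order on the residue field of `A`:
    (lo' : LinearOrder (IsLocalRing.ResidueField A))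
    (hind : ∀ a b : A, IsLocalRing.residue A a ≠ IsLocalRing.residue A b →
      (lo'.lt (IsLocalRing.residue A a) (IsLocalRing.residue A b) ↔ (a : K) < (b : K)))
    (hrc : IsRealClosedWith (IsLocalRing.ResidueField A) lo') :
    ∃ ac : K → IsLocalRing.ResidueField A, IsCompatibleAngularComponent A lo' ac :=
  exists_compatible_angularComponent_general K A lo' hind hrc
end
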